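/- arXiv:1007.0134 — 3 statements merged into one kernel-verified Lean document; each statement's English description precedes it below -/
import Mathlib

section
/- Input reduction, condition 5 (unobserved vertex whose targets are all inputs): Let (V,E,σ) be an influence graph with input set I and μ : V → {+,−} a partial vertex labeling, and let i ∈ V be a non-input vertex such that μ(i) is undefined, every k with (i,k) ∈ E is an input, and there is at least one edge (j,i) ∈ E. Then (V,E,σ) with input set I and μ are consistent if and only if (V,E,σ) with input set I ∪ {i} and μ are consistent. -/
/-- Sign multiplication: `true` stands for `+` and `false` for `−`
(`+·+ = −·− = +`, `+·− = −·+ = −`). -/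
def signMul (a b : Bool) : Bool := a == b

/-- `σ'` and `μ'` are witnessing labelings for `W` in the influence graph with
vertex type `V`, edges `E`, partial edge labeling `σ`, partial vertex labeling `μ`,
and input vertices `I`: they are total, extend `σ` and `μ`, and for every
non-input vertex `i ∈ W` there is an edge `(j, i) ∈ E` with
`μ' i = μ' j · σ' (j, i)`. -/
def Witnessing {V : Type} (E : Set (V × V)) (σ : V × V → Option Bool)
    (μ : V → Option Bool) (I : Set V) (W : Set V)
    (σ' : V × V → Bool) (μ' : V → Bool) : Prop :=
  (∀ e s, σ e = some s → σ' e = s) ∧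
  (∀ i s, μ i = some s → μ' i = s) ∧
  (∀ i ∈ W, i ∉ I → ∃ j, (j, i) ∈ E ∧ μ' i = signMul (μ' j) (σ' (j, i)))

/-- The influence graph `(V, E, σ)` with inputs `I` and the partial vertex
labeling `μ` are consistent: there are witnessing labelings for all of `V`. -/
def Consistent {V : Type} (E : Set (V × V)) (σ : V × V → Option Bool)
    (μ : V → Option Bool) (I : Set V) : Prop :=
  ∃ σ' μ', Witnessing E σ μ I Set.univ σ' μ'

/-- Input reduction, condition 5 (unobserved vertex whose targets are all inputs):
if a non-input vertex `i` is unobserved, all its targets are inputs, and it has at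
least one incoming edge, then consistency with inputs `I` is equivalent to
consistency with inputs `I ∪ {i}`. -/
theorem input_reduction_insignificant {V : Type} [Fintype V]
    (E : Set (V × V)) (σ : V × V → Option Bool) (μ : V → Option Bool) (I : Set V)
    (hσ : ∀ e, σ e ≠ none → e ∈ E)
    (i : V) (hi : i ∉ I)
    (hμi : μ i = none) (htargets : ∀ k, (i, k) ∈ E → k ∈ I)
    (j : V) (hj : (j, i) ∈ E) :
    Consistent E σ μ I ↔ Consistent E σ μ (I ∪ {i}) := by
  classical
  have hji : j ≠ i := fun h => hi (htargets i (h ▸ hj))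
  constructor
  · rintro ⟨σ', μ', h1, h2, h3⟩
    exact ⟨σ', μ', h1, h2, fun k hk hkI => h3 k hk (fun h => hkI (Or.inl h))⟩
  · rintro ⟨σ', μ', h1, h2, h3⟩
    refine ⟨σ', fun v => if v = i then signMul (μ' j) (σ' (j, i)) else μ' v,
      h1, ?_, ?_⟩
    · intro k s hk
      by_cases hki : k = i
      · rw [hki, hμi] at hk; exact absurd hk (by simp)
      · simp only [if_neg hki]; exact h2 k s hk
    · intro k _ hkI
      by_cases hki : k = i
      · subst hki
        exact ⟨j, hj, by simp [hji]⟩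
      · obtain ⟨m, hm, hmk⟩ := h3 k trivial (fun h => hkI (h.elim id (fun h => absurd h hki)))
        have hmi : m ≠ i := fun h => hkI (htargets k (h ▸ hm))
        exact ⟨m, hm, by simp [hki, hmi, hmk]⟩
end

section
/- Input reduction, condition 6 (freely adjustable input regulator): Let (V,E,σ) be an influence graph with input set I and μ : V → {+,−} a partial vertex labeling, and let i ∈ V be a non-input vertex such that there is an edge (j,i) ∈ E where μ(j) is undefined, j is an input, and every k ≠ i with (j,k) ∈ E is an input. Then (V,E,σ) with input set I and μ are consistent if and only if (V,E,σ) with input set I ∪ {i} and μ are consistent. -/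
/-- Input reduction, condition 6 (freely adjustable input regulator): if a
non-input vertex `i` has a regulator `j` via `(j, i) ∈ E` such that `μ(j)` is
undefined, `j` is an input, and every other target of `j` is an input, then
consistency with inputs `I` is equivalent to consistency with inputs `I ∪ {i}`. -/
theorem input_reduction_free_regulator {V : Type} [Fintype V]
    (E : Set (V × V)) (σ : V × V → Option Bool) (μ : V → Option Bool) (I : Set V)
    (hσ : ∀ e, σ e ≠ none → e ∈ E)
    (i : V) (hi : i ∉ I)
    (j : V) (hj : (j, i) ∈ E) (hμj : μ j = none) (hjin : j ∈ I)
    (htargets : ∀ k, k ≠ i → (j, k) ∈ E → k ∈ I) :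
    Consistent E σ μ I ↔ Consistent E σ μ (I ∪ {i}) := by
  classical
  have hij : j ≠ i := fun h => hi (h ▸ hjin)
  constructor
  · rintro ⟨σ', μ', h1, h2, h3⟩
    exact ⟨σ', μ', h1, h2, fun k hk hkI => h3 k hk (fun h => hkI (Or.inl h))⟩
  · rintro ⟨σ', μ', h1, h2, h3⟩
    refine ⟨σ', fun v => if v = j then signMul (μ' i) (σ' (j, i)) else μ' v, h1, ?_, ?_⟩
    · intro k s hks
      by_cases hkj : k = j
      · rw [hkj, hμj] at hks; exact absurd hks (by simp)
      · simpa [hkj] using h2 k s hks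
    · intro k _ hkI
      by_cases hki : k = i
      · subst hki
        refine ⟨j, hj, ?_⟩
        simp only [if_pos rfl, if_neg hij.symm]
        cases h : μ' k <;> cases σ' (j, k) <;> simp [signMul, h]
      · obtain ⟨l, hl, hrel⟩ := h3 k trivial (by rintro (h | h); exact hkI h; exact hki h)
        have hlj : l ≠ j := fun h => hkI (htargets k hki (h ▸ hl))
        have hkj : k ≠ j := fun h => hkI (h ▸ hjin)
        exact ⟨l, hl, by simpa [hkj, hlj] using hrel⟩
end

section
/- Effectively unconstrained vertices belong to no Minimal Inconsistent Core: Let (V,E,σ) be an influence graph with input set I and μ : V → {+,−} a partial vertex labeling, and let i ∈ V be a non-input vertex satisfying at least one of the following conditions: (1) (i,i) ∈ E and σ(i,i) = +; (2) there is an edge (j,i) ∈ E with σ(j,i) undefined; (3) there are edges (j,i), (k,i) ∈ E with σ(j,i), σ(k,i), μ(j), μ(k) all defined, μ(j)·σ(j,i) = + and μ(k)·σ(k,i) = −; (4) μ(i) is defined and there is an edge (j,i) ∈ E with σ(j,i) and μ(j) defined and μ(j)·σ(j,i) = μ(i); (5) μ(i) is undefined, every k with (i,k) ∈ E is an input, and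 there is at least one edge (j,i) ∈ E; (6) there is an edge (j,i) ∈ E where μ(j) is undefined, j is an input, and every k ≠ i with (j,k) ∈ E is an input. Then no Minimal Inconsistent Core W ⊆ V contains i. -/
/-- `W` is a Minimal Inconsistent Core: there are no witnessing labelings for `W`,
but every proper subset of `W` has witnessing labelings. -/
def IsMIC {V : Type} (E : Set (V × V)) (σ : V × V → Option Bool)
    (μ : V → Option Bool) (I : Set V) (W : Set V) : Prop :=
  (¬ ∃ σ' μ', Witnessing E σ μ I W σ' μ') ∧
  (∀ W', W' ⊂ W → ∃ σ' μ', Witnessing E σ μ I W' σ' μ')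

theorem signMul_true_right (a : Bool) : signMul a true = a := by
  cases a <;> rfl

theorem signMul_signMul_left (a c : Bool) : signMul a (signMul a c) = c := by
  cases a <;> cases c <;> rfl

theorem signMul_signMul_right (b c : Bool) : signMul (signMul c b) b = c := by
  cases b <;> cases c <;> rfl

section Witnessing

variable {V : Type} {E : Set (V × V)} {σ : V × V → Option Bool} {μ : V → Option Bool}
  {I : Set V} {W : Set V} {σ' : V × V → Bool} {μ' : V → Bool}

theorem Witnessing.of_diff_singleton {i : V} (h : Witnessing E σ μ I (W \ {i}) σ' μ')
    (hi : ∃ j, (j, i) ∈ E ∧ μ' i = signMul (μ' j) (σ' (j, i))) :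
    Witnessing E σ μ I W σ' μ' := by
  refine ⟨h.1, h.2.1, fun v hv hvI => ?_⟩
  by_cases hvi : v = i
  · exact hvi ▸ hi
  · exact h.2.2 v ⟨hv, hvi⟩ hvI

theorem Witnessing.update_edge [DecidableEq V] {j i : V} (h : Witnessing E σ μ I W σ' μ')
    (hσ : σ (j, i) = none) (hiW : i ∈ W → i ∈ I) (s : Bool) :
    Witnessing E σ μ I W (Function.update σ' (j, i) s) μ' := by
  refine ⟨fun e t he => ?_, h.2.1, fun v hv hvI => ?_⟩
  · have hne : e ≠ (j, i) := by rintro rfl; simp [hσ] at he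
    rw [Function.update_of_ne hne]
    exact h.1 e t he
  · obtain ⟨k, hk, heq⟩ := h.2.2 v hv hvI
    have hvi : v ≠ i := by rintro rfl; exact hvI (hiW hv)
    refine ⟨k, hk, ?_⟩
    rwa [Function.update_of_ne (by simp [hvi])]

theorem Witnessing.update_vertex [DecidableEq V] {u : V} (h : Witnessing E σ μ I W σ' μ')
    (hμ : μ u = none) (huW : u ∈ W → u ∈ I) (hout : ∀ k ∈ W, k ∉ I → (u, k) ∉ E) (b : Bool) :
    Witnessing E σ μ I W σ' (Function.update μ' u b) := by
  refine ⟨h.1, fun v t hv => ?_, fun v hv hvI => ?_⟩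
  · have hne : v ≠ u := by rintro rfl; simp [hμ] at hv
    rw [Function.update_of_ne hne]
    exact h.2.1 v t hv
  · obtain ⟨k, hk, heq⟩ := h.2.2 v hv hvI
    have hvu : v ≠ u := by rintro rfl; exact hvI (huW hv)
    have hku : k ≠ u := by rintro rfl; exact hout v hv hvI hk
    refine ⟨k, hk, ?_⟩
    rwa [Function.update_of_ne hvu, Function.update_of_ne hku]

variable {i : V}

theorem Witnessing.exists_of_pos_self_loop (h : Witnessing E σ μ I (W \ {i}) σ' μ')
    (hE : (i, i) ∈ E) (hσ : σ (i, i) = some true) : ∃ σ' μ', Witnessing E σ μ I W σ' μ' :=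
  ⟨σ', μ', h.of_diff_singleton ⟨i, hE, by rw [h.1 _ _ hσ, signMul_true_right]⟩⟩

theorem Witnessing.exists_of_unlabeled_edge (h : Witnessing E σ μ I (W \ {i}) σ' μ') {j : V}
    (hE : (j, i) ∈ E) (hσ : σ (j, i) = none) : ∃ σ' μ', Witnessing E σ μ I W σ' μ' := by
  classical
  have h' := h.update_edge hσ (fun hi => absurd rfl hi.2) (signMul (μ' j) (μ' i))
  exact ⟨_, μ', h'.of_diff_singleton ⟨j, hE, by rw [Function.update_self, signMul_signMul_left]⟩⟩

theorem Witnessing.exists_of_opposite_signs (h : Witnessing E σ μ I (W \ {i}) σ' μ')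
    {j k : V} {sj sk tj tk : Bool} (hjE : (j, i) ∈ E) (hkE : (k, i) ∈ E)
    (hσj : σ (j, i) = some sj) (hμj : μ j = some tj)
    (hσk : σ (k, i) = some sk) (hμk : μ k = some tk)
    (hpos : signMul tj sj = true) (hneg : signMul tk sk = false) :
    ∃ σ' μ', Witnessing E σ μ I W σ' μ' := by
  refine ⟨σ', μ', h.of_diff_singleton ?_⟩
  rw [← h.1 _ _ hσj, ← h.2.1 _ _ hμj] at hpos
  rw [← h.1 _ _ hσk, ← h.2.1 _ _ hμk] at hneg
  cases hi : μ' i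
  · exact ⟨k, hkE, hneg.symm⟩
  · exact ⟨j, hjE, hpos.symm⟩

theorem Witnessing.exists_of_agreeing_edge (h : Witnessing E σ μ I (W \ {i}) σ' μ')
    {j : V} {r s t : Bool} (hμi : μ i = some r) (hE : (j, i) ∈ E)
    (hσ : σ (j, i) = some s) (hμj : μ j = some t) (hst : signMul t s = r) :
    ∃ σ' μ', Witnessing E σ μ I W σ' μ' :=
  ⟨σ', μ', h.of_diff_singleton ⟨j, hE, by rw [h.1 _ _ hσ, h.2.1 _ _ hμj, hst, h.2.1 _ _ hμi]⟩⟩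

theorem Witnessing.exists_of_unlabeled_vertex (h : Witnessing E σ μ I (W \ {i}) σ' μ')
    (hi : i ∉ I) (hμ : μ i = none) (hout : ∀ k, (i, k) ∈ E → k ∈ I) {j : V} (hE : (j, i) ∈ E) :
    ∃ σ' μ', Witnessing E σ μ I W σ' μ' := by
  classical
  have hji : j ≠ i := by rintro rfl; exact hi (hout _ hE)
  have h' := h.update_vertex hμ (fun hi => absurd rfl hi.2)
    (fun k _ hk hik => hk (hout k hik)) (signMul (μ' j) (σ' (j, i)))
  exact ⟨σ', _, h'.of_diff_singleton
    ⟨j, hE, by rw [Function.update_self, Function.update_of_ne hji]⟩⟩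

theorem Witnessing.exists_of_unlabeled_input (h : Witnessing E σ μ I (W \ {i}) σ' μ')
    (hi : i ∉ I) {j : V} (hE : (j, i) ∈ E) (hμ : μ j = none) (hj : j ∈ I)
    (hout : ∀ k, k ≠ i → (j, k) ∈ E → k ∈ I) :
    ∃ σ' μ', Witnessing E σ μ I W σ' μ' := by
  classical
  have hij : i ≠ j := by rintro rfl; exact hi hj
  have h' := h.update_vertex hμ (fun _ => hj)
    (fun k hk hkI hjk => hkI (hout k hk.2 hjk)) (signMul (μ' i) (σ' (j, i)))
  exact ⟨σ', _, h'.of_diff_singleton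
    ⟨j, hE, by rw [Function.update_self, Function.update_of_ne hij, signMul_signMul_right]⟩⟩

end Witnessing

theorem unconstrained_not_in_mic_general {V : Type}
    (E : Set (V × V)) (σ : V × V → Option Bool) (μ : V → Option Bool) (I : Set V)
    (i : V) (hi : i ∉ I)
    (hcond :
      ((i, i) ∈ E ∧ σ (i, i) = some true) ∨
      (∃ j, (j, i) ∈ E ∧ σ (j, i) = none) ∨
      (∃ j k sj sk tj tk, (j, i) ∈ E ∧ (k, i) ∈ E ∧
        σ (j, i) = some sj ∧ μ j = some tj ∧
        σ (k, i) = some sk ∧ μ k = some tk ∧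
        signMul tj sj = true ∧ signMul tk sk = false) ∨
      (∃ r, μ i = some r ∧ ∃ j s t, (j, i) ∈ E ∧
        σ (j, i) = some s ∧ μ j = some t ∧ signMul t s = r) ∨
      (μ i = none ∧ (∀ k, (i, k) ∈ E → k ∈ I) ∧ ∃ j, (j, i) ∈ E) ∨
      (∃ j, (j, i) ∈ E ∧ μ j = none ∧ j ∈ I ∧
        ∀ k, k ≠ i → (j, k) ∈ E → k ∈ I)) :
    ∀ W : Set V, IsMIC E σ μ I W → i ∉ W := by
  rintro W ⟨hinconsistent, hminimal⟩ hiW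
  obtain ⟨σ', μ', h⟩ := hminimal _ (Set.sdiff_singleton_ssubset.mpr hiW)
  apply hinconsistent
  rcases hcond with ⟨hE, hσ⟩ | ⟨j, hE, hσ⟩ |
      ⟨j, k, sj, sk, tj, tk, hjE, hkE, hσj, hμj, hσk, hμk, hpos, hneg⟩ |
      ⟨r, hμi, j, s, t, hE, hσ, hμj, hst⟩ | ⟨hμ, hout, j, hE⟩ | ⟨j, hE, hμ, hj, hout⟩
  · exact h.exists_of_pos_self_loop hE hσ
  · exact h.exists_of_unlabeled_edge hE hσ
  · exact h.exists_of_opposite_signs hjE hkE hσj hμj hσk hμk hpos hneg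
  · exact h.exists_of_agreeing_edge hμi hE hσ hμj hst
  · exact h.exists_of_unlabeled_vertex hi hμ hout hE
  · exact h.exists_of_unlabeled_input hi hE hμ hj hout

/-- Effectively unconstrained vertices belong to no Minimal Inconsistent Core:
if a non-input vertex `i` satisfies one of the six input-reduction conditions,
then no MIC contains `i`. -/
theorem unconstrained_not_in_mic {V : Type} [Fintype V]
    (E : Set (V × V)) (σ : V × V → Option Bool) (μ : V → Option Bool) (I : Set V)
    (hσ : ∀ e, σ e ≠ none → e ∈ E)
    (i : V) (hi : i ∉ I)
    (hcond :
      ((i, i) ∈ E ∧ σ (i, i) = some true) ∨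
      (∃ j, (j, i) ∈ E ∧ σ (j, i) = none) ∨
      (∃ j k sj sk tj tk, (j, i) ∈ E ∧ (k, i) ∈ E ∧
        σ (j, i) = some sj ∧ μ j = some tj ∧
        σ (k, i) = some sk ∧ μ k = some tk ∧
        signMul tj sj = true ∧ signMul tk sk = false) ∨
      (∃ r, μ i = some r ∧ ∃ j s t, (j, i) ∈ E ∧
        σ (j, i) = some s ∧ μ j = some t ∧ signMul t s = r) ∨
      (μ i = none ∧ (∀ k, (i, k) ∈ E → k ∈ I) ∧ ∃ j, (j, i) ∈ E) ∨
      (∃ j, (j, i) ∈ E ∧ μ j = none ∧ j ∈ I ∧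
        ∀ k, k ≠ i → (j, k) ∈ E → k ∈ I)) :
    ∀ W : Set V, IsMIC E σ μ I W → i ∉ W :=
  unconstrained_not_in_mic_general E σ μ I i hi hcond
end
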